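/- arXiv:1906.01714 — 8 statements merged into one kernel-verified Lean document; each statement's English description precedes it below -/
import Mathlib

section
/- Let $\xi : \mathbb{R}^{a \times b} \to \mathbb{R}_{\geq 0}$ be continuous, positive definite (i.e., $\xi(0) = 0$ and $\xi(Z) > 0$ for $Z \neq 0$), and generalized homogeneous with $\mathcal{K}_\infty$ gauge $q$ (i.e., $\xi(Z) \geq q(1/|\lambda|)\,\xi(\lambda Z)$ for all real $\lambda \neq 0$ and all $Z$). Then for any norm $\|\cdot\|$ on $\mathbb{R}^{a \times b}$, setting $D = \min_{\|Z\| = 1} \xi(Z)$, we have $D > 0$ and $\xi(Z) \geq D\, q(\|Z\|)$ for all $Z \in \mathbb{R}^{a \times b}$. -/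
def IsKInf (q : ℝ → ℝ) : Prop :=
  ContinuousOn q (Set.Ici 0) ∧ q 0 = 0 ∧ StrictMonoOn q (Set.Ici 0) ∧
    Filter.Tendsto q Filter.atTop Filter.atTop

/-!
A norm `N` on a finite-dimensional space is continuous (it is convex) and dominates a multiple of
any fixed norm (compare on that norm's compact unit sphere), so `S = {N = 1}` is compact and
the continuous, positive definite `ξ` attains a positive minimum `D` on it. For `Z ≠ 0`, applying
generalized homogeneity with `λ = 1 / N Z` gives `ξ Z ≥ q (N Z) * ξ (Z / N Z) ≥ q (N Z) * D`,
because `Z / N Z ∈ S`.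
-/

open Set

lemma IsKInf.nonneg {q : ℝ → ℝ} (hq : IsKInf q) {t : ℝ} (ht : 0 ≤ t) : 0 ≤ q t := by
  obtain ⟨-, hq0, hqmono, -⟩ := hq
  exact hq0 ▸ hqmono.monotoneOn self_mem_Ici ht ht

namespace Seminorm

section Module

variable {E : Type*} [AddCommGroup E] [Module ℝ E] {p : Seminorm ℝ E}

theorem inv_smul_mem_setOf_eq_one {x : E} (hx : p x ≠ 0) : (p x)⁻¹ • x ∈ {y | p y = 1} := by
  rw [mem_ofPred_eq, map_smul_eq_mul, norm_inv, Real.norm_of_nonneg (apply_nonneg p x),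
    inv_mul_cancel₀ hx]

theorem nonempty_setOf_eq_one [Nontrivial E] (hp : ∀ x, p x = 0 → x = 0) :
    {x | p x = 1}.Nonempty :=
  let ⟨x, hx⟩ := exists_ne (0 : E)
  ⟨_, inv_smul_mem_setOf_eq_one (mt (hp x) hx)⟩

theorem sInf_image_setOf_eq_one_mul_le {q : ℝ → ℝ} (hq : IsKInf q)
    (hp : ∀ x, p x = 0 → x = 0) {ξ : E → ℝ} (hξ0 : ξ 0 = 0)
    (hξ : BddBelow (ξ '' {x | p x = 1}))
    (hGH : ∀ lam : ℝ, lam ≠ 0 → ∀ x, q (1 / |lam|) * ξ (lam • x) ≤ ξ x) (x : E) :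
    sInf (ξ '' {x | p x = 1}) * q (p x) ≤ ξ x := by
  rcases eq_or_ne x 0 with rfl | hx
  · simp [hξ0, hq.2.1]
  have hpx : 0 < p x := (apply_nonneg p x).lt_of_ne' (mt (hp x) hx)
  calc sInf (ξ '' {x | p x = 1}) * q (p x) ≤ ξ ((p x)⁻¹ • x) * q (p x) := by
        gcongr
        · exact hq.nonneg hpx.le
        · exact csInf_le hξ ⟨_, inv_smul_mem_setOf_eq_one hpx.ne', rfl⟩
    _ = q (1 / |(p x)⁻¹|) * ξ ((p x)⁻¹ • x) := by
        rw [abs_inv, abs_of_pos hpx, one_div, inv_inv, mul_comm]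
    _ ≤ ξ x := hGH _ (inv_ne_zero hpx.ne') x

end Module

variable {E : Type*} [NormedAddCommGroup E] [NormedSpace ℝ E] [FiniteDimensional ℝ E]

theorem continuous_of_finiteDimensional (p : Seminorm ℝ E) : Continuous p :=
  continuousOn_univ.mp (p.convexOn.continuousOn isOpen_univ)

variable [Nontrivial E] {p : Seminorm ℝ E}

theorem exists_pos_mul_norm_le (hp : ∀ x, p x = 0 → x = 0) : ∃ c > 0, ∀ x, c * ‖x‖ ≤ p x := by
  obtain ⟨u, hu, hmin⟩ := (isCompact_sphere (0 : E) 1).exists_isMinOn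
    (NormedSpace.sphere_nonempty.mpr zero_le_one) p.continuous_of_finiteDimensional.continuousOn
  have hu0 : u ≠ 0 := ne_zero_of_mem_unit_sphere ⟨u, hu⟩
  refine ⟨p u, (apply_nonneg p u).lt_of_ne' (mt (hp u) hu0), fun x => ?_⟩
  rcases eq_or_ne x 0 with rfl | hx
  · simp
  have hx' : 0 < ‖x‖ := norm_pos_iff.mpr hx
  have hmem : ‖x‖⁻¹ • x ∈ Metric.sphere (0 : E) 1 := by
    simp [norm_smul, hx'.ne']
  have := hmin hmem
  rw [mem_ofPred_eq, map_smul_eq_mul, norm_inv, norm_norm] at this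
  calc p u * ‖x‖ ≤ ‖x‖⁻¹ * p x * ‖x‖ := by gcongr
    _ = p x := by field_simp

theorem isCompact_setOf_eq_one (hp : ∀ x, p x = 0 → x = 0) : IsCompact {x | p x = 1} := by
  obtain ⟨c, hc, hle⟩ := exists_pos_mul_norm_le hp
  refine (isCompact_closedBall (0 : E) (1 / c)).of_isClosed_subset
    (isClosed_eq p.continuous_of_finiteDimensional continuous_const) fun x hx => ?_
  rw [mem_closedBall_zero_iff, le_div_iff₀' hc]
  exact hx ▸ hle x

end Seminorm

theorem loss_lower_bound (a b : ℕ) (ha : 0 < a) (hb : 0 < b)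
    (ξ : Matrix (Fin a) (Fin b) ℝ → ℝ)
    (N : Matrix (Fin a) (Fin b) ℝ → ℝ)
    (hN0 : ∀ Z, N Z = 0 ↔ Z = 0)
    (hNsmul : ∀ (c : ℝ) (Z), N (c • Z) = |c| * N Z)
    (hNtri : ∀ Z1 Z2, N (Z1 + Z2) ≤ N Z1 + N Z2)
    (hξ0 : ξ 0 = 0) (hξpos : ∀ Z, Z ≠ 0 → 0 < ξ Z)
    (hξcont : Continuous ξ)
    (q : ℝ → ℝ) (hq : IsKInf q)
    (hGH : ∀ lam : ℝ, lam ≠ 0 → ∀ Z, ξ Z ≥ q (1 / |lam|) * ξ (lam • Z)) :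
    0 < sInf (ξ '' {Z | N Z = 1}) ∧
      ∀ Z, ξ Z ≥ sInf (ξ '' {Z | N Z = 1}) * q (N Z) := by
  -- The entrywise sup norm induces the product topology, in which `ξ` is continuous.
  let _ : NormedAddCommGroup (Matrix (Fin a) (Fin b) ℝ) := Matrix.normedAddCommGroup
  let _ : NormedSpace ℝ (Matrix (Fin a) (Fin b) ℝ) := Matrix.normedSpace
  have : Nonempty (Fin a) := ⟨⟨0, ha⟩⟩
  have : Nonempty (Fin b) := ⟨⟨0, hb⟩⟩
  let p : Seminorm ℝ (Matrix (Fin a) (Fin b) ℝ) := Seminorm.of N hNtri hNsmul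
  have hp : ∀ Z, p Z = 0 → Z = 0 := fun Z => (hN0 Z).mp
  have hS : IsCompact {Z | p Z = 1} := p.isCompact_setOf_eq_one hp
  obtain ⟨W, hW, hWD⟩ := (hS.image hξcont).sInf_mem ((Seminorm.nonempty_setOf_eq_one hp).image ξ)
  refine ⟨?_, Seminorm.sInf_image_setOf_eq_one_mul_le hq hp hξ0 (hS.image hξcont).bddBelow hGH⟩
  exact hWD ▸ hξpos W (by rintro rfl; simp at hW)
end

section
/- If $\xi : \mathbb{R}^{a \times b} \to \mathbb{R}_{\geq 0}$ is convex and satisfies the generalized homogeneity property $\xi(Z) \geq q(1/|\lambda|)\,\xi(\lambda Z)$ for all $\lambda \neq 0$ and all $Z$, where $q$ is a $\mathcal{K}_\infty$ function, then $\xi$ satisfies the generalized triangle inequality $\xi(Z_1 - Z_2) \geq \gamma\,\xi(Z_1) - \xi(Z_2)$ for all $Z_1, Z_2$ with constant $\gamma = 2q(1/2)$. -/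
theorem ConvexOn.two_mul_apply_half_smul_add_le {E : Type*} [AddCommGroup E] [Module ℝ E]
    {s : Set E} {f : E → ℝ} (hf : ConvexOn ℝ s f) {x y : E} (hx : x ∈ s) (hy : y ∈ s) :
    2 * f ((1 / 2 : ℝ) • (x + y)) ≤ f x + f y := by
  have h := hf.2 hx hy (by norm_num : (0 : ℝ) ≤ 1 / 2)
    (by norm_num : (0 : ℝ) ≤ 1 / 2) (by norm_num)
  rw [← smul_add, smul_eq_mul, smul_eq_mul] at h
  linarith

theorem convex_GH_implies_GTI_general (a b : ℕ) (ξ : Matrix (Fin a) (Fin b) ℝ → ℝ)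
    (hconv : ConvexOn ℝ Set.univ ξ)
    (q : ℝ → ℝ)
    (hGH : ∀ lam : ℝ, lam ≠ 0 → ∀ Z, ξ Z ≥ q (1 / |lam|) * ξ (lam • Z)) :
    ∀ Z1 Z2, ξ (Z1 - Z2) ≥ 2 * q (1 / 2) * ξ Z1 - ξ Z2 := by
  intro Z1 Z2
  have hhalf : q (1 / 2) * ξ Z1 ≤ ξ ((1 / 2 : ℝ) • Z1) := by
    simpa [smul_smul] using hGH 2 two_ne_zero ((1 / 2 : ℝ) • Z1)
  have hmid := hconv.two_mul_apply_half_smul_add_le (Set.mem_univ (Z1 - Z2)) (Set.mem_univ Z2)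
  rw [sub_add_cancel] at hmid
  linarith

theorem convex_GH_implies_GTI (a b : ℕ) (ξ : Matrix (Fin a) (Fin b) ℝ → ℝ)
    (hconv : ConvexOn ℝ Set.univ ξ)
    (q : ℝ → ℝ) (hq : IsKInf q)
    (hGH : ∀ lam : ℝ, lam ≠ 0 → ∀ Z, ξ Z ≥ q (1 / |lam|) * ξ (lam • Z)) :
    ∀ Z1 Z2, ξ (Z1 - Z2) ≥ 2 * q (1 / 2) * ξ Z1 - ξ Z2 :=
  convex_GH_implies_GTI_general a b ξ hconv q hGH
end

section
/- Let $\ell : \mathbb{R}^{n_y} \to \mathbb{R}_{\geq 0}$ satisfy: $\ell(0) = 0$, $\ell(y) > 0$ for $y \neq 0$, continuity, symmetry $\ell(-y) = \ell(y)$, and the generalized triangle inequality $\ell(a - b) \geq \gamma_\ell\,\ell(a) - \ell(b)$ with constant $\gamma_\ell \in (0, 1]$. Then the function $\psi(y) = 1 - e^{-\ell(y)}$ also satisfies positive definiteness, continuity, symmetry, and the generalized triangle inequality with the same constant $\gamma_\ell$. -/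
/-!
`ψ t = 1 - exp (-t)` is monotone, vanishes at `0` and is concave, hence subadditive on `[0, ∞)` and
satisfies `γ ψ t ≤ ψ (γ t)` for `γ ∈ [0, 1]`. Any such map preserves the generalized triangle
inequality of a nonnegative `ℓ`: `γ ψ(ℓ a) ≤ ψ(γ ℓ a) ≤ ψ(ℓ (a - b) + ℓ b) ≤ ψ(ℓ (a - b)) + ψ(ℓ b)`.
-/

open Real

def GenTriangleIneq {E : Type*} [Sub E] (γ : ℝ) (ℓ : E → ℝ) : Prop :=
  ∀ a b, γ * ℓ a - ℓ b ≤ ℓ (a - b)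

theorem GenTriangleIneq.comp {E : Type*} [Sub E] {ℓ : E → ℝ} {f : ℝ → ℝ} {γ : ℝ}
    (hℓ : GenTriangleIneq γ ℓ) (hℓ_nonneg : ∀ y, 0 ≤ ℓ y) (hf_mono : Monotone f)
    (hf_add : ∀ x y, 0 ≤ x → 0 ≤ y → f (x + y) ≤ f x + f y)
    (hf_mul : ∀ x, 0 ≤ x → γ * f x ≤ f (γ * x)) :
    GenTriangleIneq γ (f ∘ ℓ) := by
  intro a b
  have : γ * f (ℓ a) ≤ f (ℓ (a - b)) + f (ℓ b) :=
    calc γ * f (ℓ a) ≤ f (γ * ℓ a) := hf_mul _ (hℓ_nonneg a)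
      _ ≤ f (ℓ (a - b) + ℓ b) := hf_mono (by linarith [hℓ a b])
      _ ≤ f (ℓ (a - b)) + f (ℓ b) := hf_add _ _ (hℓ_nonneg _) (hℓ_nonneg b)
  simp only [Function.comp_apply]
  linarith

theorem one_sub_exp_neg_monotone : Monotone fun t : ℝ => 1 - exp (-t) :=
  fun _ _ h => sub_le_sub_left (exp_le_exp.2 (neg_le_neg h)) 1

theorem one_sub_exp_neg_add_le {x y : ℝ} (hx : 0 ≤ x) (hy : 0 ≤ y) :
    1 - exp (-(x + y)) ≤ (1 - exp (-x)) + (1 - exp (-y)) := by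
  have h : 0 ≤ (1 - exp (-x)) * (1 - exp (-y)) :=
    mul_nonneg (sub_nonneg.2 (exp_le_one_iff.2 (neg_nonpos.2 hx)))
      (sub_nonneg.2 (exp_le_one_iff.2 (neg_nonpos.2 hy)))
  rw [neg_add, exp_add]
  linarith

theorem mul_one_sub_exp_neg_le {γ : ℝ} (hγ0 : 0 ≤ γ) (hγ1 : γ ≤ 1) (x : ℝ) :
    γ * (1 - exp (-x)) ≤ 1 - exp (-(γ * x)) := by
  have h := convexOn_exp.2 (Set.mem_univ (-x)) (Set.mem_univ 0) hγ0 (sub_nonneg.2 hγ1)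
    (add_sub_cancel γ 1)
  simp only [smul_eq_mul, mul_zero, add_zero, exp_zero, mul_one, mul_neg] at h
  linarith

theorem exp_loss_properties (ny : ℕ) (ℓ : (Fin ny → ℝ) → ℝ)
    (h0 : ℓ 0 = 0) (hpos : ∀ y, y ≠ 0 → 0 < ℓ y)
    (hcont : Continuous ℓ) (hsym : ∀ y, ℓ (-y) = ℓ y)
    (γ : ℝ) (hγ0 : 0 < γ) (hγ1 : γ ≤ 1)
    (hGTI : ∀ a b, ℓ (a - b) ≥ γ * ℓ a - ℓ b) :
    (1 - Real.exp (-ℓ 0) = 0) ∧ (∀ y, y ≠ 0 → 0 < 1 - Real.exp (-ℓ y)) ∧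
      Continuous (fun y => 1 - Real.exp (-ℓ y)) ∧
      (∀ y, 1 - Real.exp (-ℓ (-y)) = 1 - Real.exp (-ℓ y)) ∧
      (∀ a b, 1 - Real.exp (-ℓ (a - b)) ≥
        γ * (1 - Real.exp (-ℓ a)) - (1 - Real.exp (-ℓ b))) := by
  have hℓ_nonneg : ∀ y, 0 ≤ ℓ y := fun y => by
    rcases eq_or_ne y 0 with rfl | hy
    exacts [h0.ge, (hpos y hy).le]
  refine ⟨by simp [h0], fun y hy => sub_pos.2 (exp_lt_one_iff.2 (neg_neg_of_pos (hpos y hy))),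
    by fun_prop, fun y => by rw [hsym], ?_⟩
  exact GenTriangleIneq.comp (f := fun t => 1 - exp (-t)) hGTI hℓ_nonneg one_sub_exp_neg_monotone
    (fun _ _ => one_sub_exp_neg_add_le) (fun _ _ => mul_one_sub_exp_neg_le hγ0.le hγ1 _)
end

section
/- Let $\ell : \mathbb{R}^{n_y} \to \mathbb{R}_{\geq 0}$ be continuous, positive definite, and exactly generalized-homogeneous in the sense that $\ell(y/\lambda) = q(1/\lambda)\,\ell(y)$ for all $\lambda > 0$ and all $y$, where $q$ is a $\mathcal{K}_\infty$ function. Define for $\lambda > 0$: $q^\star(\lambda) = \inf_{y \neq 0} \frac{1 - e^{-\ell(y)}}{1 - e^{-\ell(y/\lambda)}}$. Then $q^\star(\lambda) = 1/q(1/\lambda)$ for $0 < \lambda \leq 1$ and $q^\star(\lambda) = 1$ for $\lambda > 1$; in particular $1 - e^{-\ell(y)} \geq q^\star(1/\lambda)\,(1 - e^{-\ell(\lambda y)})$ for all $\lambda > 0$ and all $y$. -/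
/-!
Homogeneity turns the ratio `(1 - e^{-ℓ y}) / (1 - e^{-ℓ (y / λ)})` into
`(1 - e^{-t}) / (1 - e^{-c t})` with `t = ℓ y` and `c = q (1 / λ)`, and `ℓ` takes every
positive value on `y ≠ 0`, so `q⋆(λ)` is the infimum of that scalar ratio over `t > 0`.
For `c ≥ 1` Bernoulli's inequality bounds the ratio below by `1 / c`, its limit at `t → 0⁺`;
for `c ≤ 1` the ratio is at least `1`, its limit at `t → ∞`. Since `q` is increasing with
`q 1 = 1`, the case split `c ≥ 1` is exactly `λ ≤ 1`. The final inequality only says that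
the infimum `q⋆(1 / λ)` lies below each of the ratios it is taken over.
-/

open Real Filter Set Topology

theorem IsKInf.image_Ioi {q : ℝ → ℝ} (hq : IsKInf q) : q '' Ioi 0 = Ioi 0 := by
  obtain ⟨hcont, hzero, hmono, htop⟩ := hq
  rw [hcont.image_Ioi_of_strictMonoOn hmono htop, hzero]

theorem csInf_image_eq_of_tendsto {α : Type*} {f : α → ℝ} {s : Set α} {l : Filter α} [l.NeBot]
    {L : ℝ} (hlb : ∀ x ∈ s, L ≤ f x) (hs : s ∈ l) (ht : Tendsto f l (𝓝 L)) :
    sInf (f '' s) = L := by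
  have hglb : IsGLB (f '' s) L :=
    isGLB_of_mem_closure (forall_mem_image.mpr hlb)
      (mem_closure_of_tendsto ht (mem_of_superset hs (subset_preimage_image f s)))
  exact hglb.csInf_eq ((Filter.nonempty_of_mem hs).image f)

theorem one_sub_exp_neg_mul_le {c : ℝ} (hc : 1 ≤ c) (t : ℝ) :
    1 - exp (-(c * t)) ≤ c * (1 - exp (-t)) := by
  have hbernoulli : 1 + c * (exp (-t) - 1) ≤ (1 + (exp (-t) - 1)) ^ c :=
    one_add_mul_self_le_rpow_one_add (by linarith [exp_pos (-t)]) hc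
  rw [add_sub_cancel, ← exp_mul, neg_mul, mul_comm t c] at hbernoulli
  linarith

theorem one_sub_exp_neg_pos {t : ℝ} (ht : 0 < t) : 0 < 1 - exp (-t) := by
  rwa [sub_pos, exp_lt_one_iff, neg_lt_zero]

theorem tendsto_inv_mul_one_sub_exp_neg_mul (c : ℝ) :
    Tendsto (fun t => t⁻¹ * (1 - exp (-(c * t)))) (𝓝[>] 0) (𝓝 c) := by
  have hderiv : HasDerivAt (fun t => 1 - exp (-(c * t))) c 0 := by
    simpa using (((hasDerivAt_id (0 : ℝ)).const_mul c).neg.exp).const_sub 1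
  simpa using hderiv.tendsto_slope_zero_right

noncomputable def expRatio (c t : ℝ) : ℝ := (1 - exp (-t)) / (1 - exp (-(c * t)))

theorem tendsto_expRatio_nhdsGT_zero {c : ℝ} (hc : 0 < c) :
    Tendsto (expRatio c) (𝓝[>] 0) (𝓝 (1 / c)) := by
  have hone : Tendsto (fun t => t⁻¹ * (1 - exp (-t))) (𝓝[>] 0) (𝓝 1) := by
    simpa using tendsto_inv_mul_one_sub_exp_neg_mul 1
  have h := hone.div (tendsto_inv_mul_one_sub_exp_neg_mul c) hc.ne'
  refine h.congr' (eventually_nhdsWithin_of_forall fun t (ht : 0 < t) => ?_)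
  rw [Pi.div_apply, expRatio, mul_div_mul_left _ _ (inv_ne_zero ht.ne')]

theorem tendsto_expRatio_atTop {c : ℝ} (hc : 0 < c) : Tendsto (expRatio c) atTop (𝓝 1) := by
  have hlim : ∀ a : ℝ, 0 < a → Tendsto (fun t => 1 - exp (-(a * t))) atTop (𝓝 1) := fun a ha => by
    simpa using tendsto_exp_neg_atTop_nhds_zero.comp (tendsto_id.const_mul_atTop ha)
      |>.const_sub 1
  have hone : Tendsto (fun t => 1 - exp (-t)) atTop (𝓝 1) := by simpa using hlim 1 one_pos
  have h := hone.div (hlim c hc) one_ne_zero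
  rwa [div_one] at h

theorem bddBelow_image_expRatio {c : ℝ} (hc : 0 < c) : BddBelow (expRatio c '' Ioi 0) :=
  ⟨0, forall_mem_image.mpr fun _ ht =>
    div_nonneg (one_sub_exp_neg_pos ht).le (one_sub_exp_neg_pos (mul_pos hc ht)).le⟩

theorem IsKInf.pos {q : ℝ → ℝ} (hq : IsKInf q) {x : ℝ} (hx : 0 < x) : 0 < q x := by
  have hqx : q x ∈ q '' Ioi 0 := mem_image_of_mem q hx
  rwa [hq.image_Ioi] at hqx

theorem csInf_expRatio_of_one_le {c : ℝ} (hc : 1 ≤ c) : sInf (expRatio c '' Ioi 0) = 1 / c := by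
  have hc0 : 0 < c := by linarith
  refine csInf_image_eq_of_tendsto (fun t (ht : 0 < t) => ?_) self_mem_nhdsWithin
    (tendsto_expRatio_nhdsGT_zero hc0)
  rw [expRatio, div_le_div_iff₀ hc0 (one_sub_exp_neg_pos (mul_pos hc0 ht)), one_mul]
  linarith [one_sub_exp_neg_mul_le hc t]

theorem csInf_expRatio_of_le_one {c : ℝ} (hc0 : 0 < c) (hc : c ≤ 1) :
    sInf (expRatio c '' Ioi 0) = 1 := by
  refine csInf_image_eq_of_tendsto (fun t (ht : 0 < t) => ?_) (Ioi_mem_atTop 0)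
    (tendsto_expRatio_atTop hc0)
  rw [expRatio, le_div_iff₀ (one_sub_exp_neg_pos (mul_pos hc0 ht)), one_mul, sub_le_sub_iff_left,
    exp_le_exp, neg_le_neg_iff]
  nlinarith

theorem image_ne_zero_eq_Ioi_of_homogeneous {E : Type*} [AddCommGroup E] [Module ℝ E]
    {ℓ : E → ℝ} {q : ℝ → ℝ} (hq : IsKInf q) (hpos : ∀ y, y ≠ 0 → 0 < ℓ y)
    (hscale : ∀ s : ℝ, 0 < s → ∀ y, ℓ (s • y) = q s * ℓ y) {y₀ : E} (hy₀ : y₀ ≠ 0) :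
    ℓ '' {y | y ≠ 0} = Ioi 0 := by
  refine subset_antisymm (image_subset_iff.mpr fun y hy => hpos y hy) fun v (hv : 0 < v) => ?_
  have hv' : v / ℓ y₀ ∈ q '' Ioi 0 := by
    rw [hq.image_Ioi]
    exact div_pos hv (hpos y₀ hy₀)
  obtain ⟨s, hs : 0 < s, hqs⟩ := hv'
  refine ⟨s • y₀, smul_ne_zero hs.ne' hy₀, ?_⟩
  rw [hscale s hs, hqs, div_mul_cancel₀ _ (hpos y₀ hy₀).ne']

theorem qstar_properties_general (ny : ℕ) (hny : 0 < ny) (ℓ : (Fin ny → ℝ) → ℝ)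
    (h0 : ℓ 0 = 0) (hpos : ∀ y, y ≠ 0 → 0 < ℓ y)
    (q : ℝ → ℝ) (hq : IsKInf q)
    (hGH : ∀ lam : ℝ, 0 < lam → ∀ y, ℓ (lam⁻¹ • y) = q (1 / lam) * ℓ y)
    (qstar : ℝ → ℝ)
    (hqstar : ∀ lam : ℝ, 0 < lam → qstar lam =
      sInf ((fun y => (1 - Real.exp (-ℓ y)) / (1 - Real.exp (-ℓ (lam⁻¹ • y)))) ''
        {y : Fin ny → ℝ | y ≠ 0})) :
    (∀ lam : ℝ, 0 < lam → lam ≤ 1 → qstar lam = 1 / q (1 / lam)) ∧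
      (∀ lam : ℝ, 1 < lam → qstar lam = 1) ∧
      (∀ lam : ℝ, 0 < lam → ∀ y,
        1 - Real.exp (-ℓ y) ≥ qstar (1 / lam) * (1 - Real.exp (-ℓ (lam • y)))) := by
  obtain ⟨y₀, hy₀⟩ : ∃ y : Fin ny → ℝ, y ≠ 0 :=
    ⟨fun _ => 1, fun h => one_ne_zero (congrFun h ⟨0, hny⟩)⟩
  have hscale : ∀ s : ℝ, 0 < s → ∀ y, ℓ (s • y) = q s * ℓ y := fun s hs y => by
    simpa using hGH s⁻¹ (inv_pos.mpr hs) y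
  have hq1 : q 1 = 1 := by
    have h := hGH 1 one_pos y₀
    rw [inv_one, one_smul, div_one] at h
    exact mul_right_cancel₀ (hpos y₀ hy₀).ne' (h.symm.trans (one_mul _).symm)
  have hset : ∀ lam : ℝ, 0 < lam →
      (fun y => (1 - exp (-ℓ y)) / (1 - exp (-ℓ (lam⁻¹ • y)))) '' {y | y ≠ 0} =
        expRatio (q (1 / lam)) '' Ioi 0 := fun lam hlam => by
    rw [← image_ne_zero_eq_Ioi_of_homogeneous hq hpos hscale hy₀, image_image]
    exact image_congr fun y _ => by rw [expRatio, hGH lam hlam]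
  have hqmono := hq.2.2.1.monotoneOn
  refine ⟨fun lam hlam hlam1 => ?_, fun lam hlam => ?_, fun lam hlam y => ?_⟩
  · have hc : q 1 ≤ q (1 / lam) :=
      hqmono (mem_Ici.mpr zero_le_one) (one_div_pos.mpr hlam).le (one_le_one_div hlam hlam1)
    rw [hqstar lam hlam, hset lam hlam, csInf_expRatio_of_one_le (hq1.ge.trans hc)]
  · have hlam0 : 0 < lam := zero_lt_one.trans hlam
    have hc : q (1 / lam) ≤ q 1 :=
      hqmono (one_div_pos.mpr hlam0).le (mem_Ici.mpr zero_le_one)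
        (div_le_one_of_le₀ hlam.le hlam0.le)
    rw [hqstar lam hlam0, hset lam hlam0,
      csInf_expRatio_of_le_one (hq.pos (one_div_pos.mpr hlam0)) (hc.trans hq1.le)]
  · rcases eq_or_ne y 0 with rfl | hy
    · simp [h0]
    have hlam' : 0 < 1 / lam := one_div_pos.mpr hlam
    have hle : qstar (1 / lam) ≤ (1 - exp (-ℓ y)) / (1 - exp (-ℓ (lam • y))) := by
      rw [hqstar _ hlam']
      refine csInf_le ?_ ⟨y, hy, by simp only [one_div, inv_inv]⟩
      rw [hset _ hlam']
      exact bddBelow_image_expRatio (hq.pos (one_div_pos.mpr hlam'))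
    rwa [ge_iff_le, ← le_div_iff₀ (one_sub_exp_neg_pos (hpos _ (smul_ne_zero hlam.ne' hy)))]

theorem qstar_properties (ny : ℕ) (hny : 0 < ny) (ℓ : (Fin ny → ℝ) → ℝ)
    (hcont : Continuous ℓ) (h0 : ℓ 0 = 0) (hpos : ∀ y, y ≠ 0 → 0 < ℓ y)
    (q : ℝ → ℝ) (hq : IsKInf q)
    (hGH : ∀ lam : ℝ, 0 < lam → ∀ y, ℓ (lam⁻¹ • y) = q (1 / lam) * ℓ y)
    (qstar : ℝ → ℝ)
    (hqstar : ∀ lam : ℝ, 0 < lam → qstar lam =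
      sInf ((fun y => (1 - Real.exp (-ℓ y)) / (1 - Real.exp (-ℓ (lam⁻¹ • y)))) ''
        {y : Fin ny → ℝ | y ≠ 0})) :
    (∀ lam : ℝ, 0 < lam → lam ≤ 1 → qstar lam = 1 / q (1 / lam)) ∧
      (∀ lam : ℝ, 1 < lam → qstar lam = 1) ∧
      (∀ lam : ℝ, 0 < lam → ∀ y,
        1 - Real.exp (-ℓ y) ≥ qstar (1 / lam) * (1 - Real.exp (-ℓ (lam • y)))) :=
  qstar_properties_general ny hny ℓ h0 hpos q hq hGH qstar hqstar
end

section
/- Consider the functional $V_\Sigma^\circ(Y, z) = \sum_{t=0}^{T-1} \psi_t(y_t - M_t z)$ where each $\psi_t : \mathbb{R}^{n_y} \to \mathbb{R}_{\geq 0}$ is positive definite, symmetric, and satisfies the triangle-type inequality $\psi_t(a - b) \geq \psi_t(a) - \psi_t(b)$, and where the stacked matrix of the $M_t$ has full column rank $n$. For a positive integer $r$, define the $r$-th concentration ratio $\nu_r(M) = \sup_{z \neq 0} \sup_{|\mathbb{I}| = r} \frac{\sum_{t \in \mathbb{I}} \psi_t(M_t z)}{\sum_{t \in \mathbb{T}}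 \psi_t(M_t z)}$ where $\mathbb{I}$ ranges over subsets of $\mathbb{T} = \{0, \dots, T-1\}$ of cardinality $r$. Then the following are equivalent: (i) for every $Y \in \mathbb{R}^{n_y \times T}$ and every $z_0 \in \mathbb{R}^n$ such that $|\{t : y_t \neq M_t z_0\}| \leq r$, $z_0$ is the unique minimizer of $V_\Sigma^\circ(Y, \cdot)$; (ii) $\nu_r(M) < 1/2$. -/
/-!
Write `V(z) = ∑ₜ ψₜ(Yₜ - Mₜ z)`. If the residual `Y - M z₀` vanishes off a set `I` of size `r`
and `d = z - z₀`, the generalized triangle inequality on `I` and symmetry off `I` give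
`V(z) ≥ V(z₀) + ∑ₜ ψₜ(Mₜ d) - 2 ∑_{t ∈ I} ψₜ(Mₜ d)`, so `V(z) > V(z₀)` once `ν_r(M) < 1/2`.
Conversely, the data `Yₜ = Mₜ z` for `t ∈ I` and `Yₜ = 0` otherwise have at most `r` outliers
relative to `z₀ = 0`, and `V(0) < V(z)` then reads `∑_{t ∈ I} ψₜ(Mₜ z) < ∑_{t ∉ I} ψₜ(Mₜ z)`.
-/

open Finset Matrix

theorem nonneg_of_le_apply_sub {E : Type*} [AddGroup E] {φ : E → ℝ} (h0 : φ 0 = 0)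
    (hneg : ∀ e, φ (-e) = φ e) (hsub : ∀ a b, φ a - φ b ≤ φ (a - b)) (e : E) : 0 ≤ φ e := by
  have h := hsub 0 e
  rw [zero_sub, hneg, h0] at h
  linarith

section Residuals

variable {ι E : Type*} [Fintype ι] [AddCommGroup E] {ψ : ι → E → ℝ}

theorem sum_add_sum_sub_two_mul_le_sum_sub (h0 : ∀ t, ψ t 0 = 0)
    (hneg : ∀ t e, ψ t (-e) = ψ t e) (hsub : ∀ t a b, ψ t a - ψ t b ≤ ψ t (a - b))
    (S : Finset ι) {u v : ι → E} (hu : ∀ t ∉ S, u t = 0) :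
    ∑ t, ψ t (u t) + ∑ t, ψ t (v t) - 2 * ∑ t ∈ S, ψ t (v t) ≤ ∑ t, ψ t (u t - v t) := by
  classical
  have hpoint : ∀ t, ψ t (u t) + ψ t (v t) - 2 * (if t ∈ S then ψ t (v t) else 0)
      ≤ ψ t (u t - v t) := by
    intro t
    by_cases ht : t ∈ S
    · simp only [ht, if_true]
      linarith [hsub t (u t) (v t)]
    · simp [ht, hu t ht, h0, hneg]
  calc ∑ t, ψ t (u t) + ∑ t, ψ t (v t) - 2 * ∑ t ∈ S, ψ t (v t)
      = ∑ t, (ψ t (u t) + ψ t (v t) - 2 * (if t ∈ S then ψ t (v t) else 0)) := by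
        rw [sum_sub_distrib, sum_add_distrib, ← mul_sum, sum_ite_mem, univ_inter]
    _ ≤ ∑ t, ψ t (u t - v t) := sum_le_sum fun t _ => hpoint t

variable [DecidableEq ι]

theorem sum_apply_ite_mem (h0 : ∀ t, ψ t 0 = 0) (I : Finset ι) (v : ι → E) :
    ∑ t, ψ t (if t ∈ I then v t else 0) = ∑ t ∈ I, ψ t (v t) := by
  simp [apply_ite, h0, sum_ite_mem]

theorem sum_apply_ite_mem_sub (h0 : ∀ t, ψ t 0 = 0) (hneg : ∀ t e, ψ t (-e) = ψ t e)
    (I : Finset ι) (v : ι → E) :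
    ∑ t, ψ t ((if t ∈ I then v t else 0) - v t) = ∑ t ∈ Iᶜ, ψ t (v t) := by
  rw [← sum_apply_ite_mem h0 Iᶜ v]
  refine sum_congr rfl fun t _ => ?_
  by_cases ht : t ∈ I <;> simp [ht, h0, hneg]

end Residuals

section Recovery

variable {ι m k R : Type*} [Fintype ι] [Fintype k] [Ring R]
  {ψ : ι → (m → R) → ℝ} {M : ι → Matrix m k R} {r : ℕ}

theorem sum_sub_mulVec_lt_of_concentration_lt_half (h0 : ∀ t, ψ t 0 = 0)
    (hneg : ∀ t e, ψ t (-e) = ψ t e) (hsub : ∀ t a b, ψ t a - ψ t b ≤ ψ t (a - b))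
    (hr : r ≤ Fintype.card ι)
    (hconc : ∀ d : k → R, d ≠ 0 → ∀ I : Finset ι, I.card = r →
      ∑ t ∈ I, ψ t (M t *ᵥ d) < (1 / 2) * ∑ t, ψ t (M t *ᵥ d))
    {Y : ι → m → R} {z₀ : k → R} (hY : {t | Y t ≠ M t *ᵥ z₀}.ncard ≤ r) {z : k → R}
    (hz : z ≠ z₀) :
    ∑ t, ψ t (Y t - M t *ᵥ z₀) < ∑ t, ψ t (Y t - M t *ᵥ z) := by
  classical
  obtain ⟨I, hSI, hI⟩ := exists_superset_card_eq (n := r)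
    (s := {t | Y t ≠ M t *ᵥ z₀}.toFinset) (by rwa [← Set.ncard_eq_toFinset_card']) hr
  have hsupp : ∀ t ∉ I, Y t - M t *ᵥ z₀ = 0 := fun t ht => by
    simpa [sub_eq_zero] using mt (@hSI t) ht
  have hsplit : ∀ t, Y t - M t *ᵥ z = (Y t - M t *ᵥ z₀) - M t *ᵥ (z - z₀) := fun t => by
    rw [mulVec_sub]; abel
  have hcost := sum_add_sum_sub_two_mul_le_sum_sub h0 hneg hsub I hsupp
    (v := fun t => M t *ᵥ (z - z₀))
  have hnn : 0 ≤ ∑ t, ψ t (M t *ᵥ (z - z₀)) := sum_nonneg fun t _ =>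
    nonneg_of_le_apply_sub (h0 t) (hneg t) (hsub t) _
  simp only [← hsplit] at hcost
  linarith [hconc (z - z₀) (sub_ne_zero.mpr hz) I hI]

theorem concentration_lt_half_of_sum_sub_mulVec_lt [DecidableEq ι] (h0 : ∀ t, ψ t 0 = 0)
    (hneg : ∀ t e, ψ t (-e) = ψ t e)
    (hrec : ∀ (Y : ι → m → R) (z₀ : k → R), {t | Y t ≠ M t *ᵥ z₀}.ncard ≤ r →
      ∀ z, z ≠ z₀ → ∑ t, ψ t (Y t - M t *ᵥ z₀) < ∑ t, ψ t (Y t - M t *ᵥ z))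
    {z : k → R} (hz : z ≠ 0) {I : Finset ι} (hI : I.card = r) :
    ∑ t ∈ I, ψ t (M t *ᵥ z) < (1 / 2) * ∑ t, ψ t (M t *ᵥ z) := by
  set Y : ι → m → R := fun t => if t ∈ I then M t *ᵥ z else 0
  have hY : {t | Y t ≠ M t *ᵥ 0}.ncard ≤ r := by
    refine hI ▸ (Set.ncard_le_ncard (fun t ht => ?_) I.finite_toSet).trans
      (Set.ncard_coe_finset I).le
    by_contra hti
    simp [Y, Finset.mem_coe.not.mp hti] at ht
  have h := hrec Y 0 hY z hz
  simp only [mulVec_zero, sub_zero, Y, sum_apply_ite_mem h0, sum_apply_ite_mem_sub h0 hneg] at h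
  linarith [sum_add_sum_compl I fun t => ψ t (M t *ᵥ z)]

end Recovery

theorem exact_recoverability_general (T n ny : ℕ) (r : ℕ) (hrT : r ≤ T)
    (M : Fin T → Matrix (Fin ny) (Fin n) ℝ)
    (ψ : Fin T → (Fin ny → ℝ) → ℝ)
    (hψ0 : ∀ t, ψ t 0 = 0)
    (hψsym : ∀ t e, ψ t (-e) = ψ t e)
    (hψGTI : ∀ t a b, ψ t (a - b) ≥ ψ t a - ψ t b) :
    (∀ (Y : Fin T → Fin ny → ℝ) (z0 : Fin n → ℝ),
        {t : Fin T | Y t ≠ (M t).mulVec z0}.ncard ≤ r →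
        ∀ z : Fin n → ℝ, z ≠ z0 →
          ∑ t, ψ t (Y t - (M t).mulVec z0) < ∑ t, ψ t (Y t - (M t).mulVec z)) ↔
      (∀ z : Fin n → ℝ, z ≠ 0 → ∀ I : Finset (Fin T), I.card = r →
        ∑ t ∈ I, ψ t ((M t).mulVec z) < (1 / 2) * ∑ t, ψ t ((M t).mulVec z)) :=
  ⟨fun hrec _ hz _ hI => concentration_lt_half_of_sum_sub_mulVec_lt hψ0 hψsym hrec hz hI,
    fun hconc _ _ hY _ hz => sum_sub_mulVec_lt_of_concentration_lt_half hψ0 hψsym hψGTI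
      (by rwa [Fintype.card_fin]) hconc hY hz⟩

theorem exact_recoverability (T n ny : ℕ) (r : ℕ) (hr0 : 0 < r) (hrT : r ≤ T)
    (M : Fin T → Matrix (Fin ny) (Fin n) ℝ)
    (ψ : Fin T → (Fin ny → ℝ) → ℝ)
    (hψ0 : ∀ t, ψ t 0 = 0) (hψpos : ∀ t e, e ≠ 0 → 0 < ψ t e)
    (hψsym : ∀ t e, ψ t (-e) = ψ t e)
    (hψGTI : ∀ t a b, ψ t (a - b) ≥ ψ t a - ψ t b)
    (hrank : ∀ z : Fin n → ℝ, (∀ t, (M t).mulVec z = 0) → z = 0) :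
    (∀ (Y : Fin T → Fin ny → ℝ) (z0 : Fin n → ℝ),
        {t : Fin T | Y t ≠ (M t).mulVec z0}.ncard ≤ r →
        ∀ z : Fin n → ℝ, z ≠ z0 →
          ∑ t, ψ t (Y t - (M t).mulVec z0) < ∑ t, ψ t (Y t - (M t).mulVec z)) ↔
      (∀ z : Fin n → ℝ, z ≠ 0 → ∀ I : Finset (Fin T), I.card = r →
        ∑ t ∈ I, ψ t ((M t).mulVec z) < (1 / 2) * ∑ t, ψ t ((M t).mulVec z)) :=
  exact_recoverability_general T n ny r hrT M ψ hψ0 hψsym hψGTI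
end

section
/- Direction (ii) ⟹ (i) of the exact recoverability theorem: with $\{\psi_t\}$ positive definite, symmetric, satisfying $\psi_t(a - b) \geq \psi_t(a) - \psi_t(b)$, and $\nu_r(M) < 1/2$, if $Y$ and $z_0$ satisfy $|\{t \in \{0,\dots,T-1\} : y_t \neq M_t z_0\}| \leq r$, then $V_\Sigma^\circ(Y, z_0) < V_\Sigma^\circ(Y, z)$ for every $z \neq z_0$, where $V_\Sigma^\circ(Y, z) = \sum_{t=0}^{T-1} \psi_t(y_t - M_t z)$. -/
/-!
Write `e = z - z₀`. On the clean indices (`y_t = M_t z₀`) the loss at `z` is `ψ_t(M_t e)`, and on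
the at most `r` corrupted indices the triangle-type inequality bounds it below by
`ψ_t(y_t - M_t z₀) - ψ_t(M_t e)`. Hence `V(z) - V(z₀) ≥ ∑_t ψ_t(M_t e) - 2 ∑_{corrupted} ψ_t(M_t e)`,
which is positive because `ν_r(M) < 1/2`.
-/

open Finset

section RobustLoss

variable {ι E : Type*} [Fintype ι] [AddGroup E]

theorem nonneg_of_map_sub_ge {φ : E → ℝ} (h0 : φ 0 = 0) (hneg : ∀ e, φ (-e) = φ e)
    (hsub : ∀ a b, φ (a - b) ≥ φ a - φ b) (e : E) : 0 ≤ φ e := by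
  have := hsub 0 e
  rw [zero_sub, hneg, h0] at this
  linarith

theorem sum_add_sub_two_mul_le_sum_sub {ψ : ι → E → ℝ} (hψ0 : ∀ t, ψ t 0 = 0)
    (hψsym : ∀ t e, ψ t (-e) = ψ t e) (hψsub : ∀ t a b, ψ t (a - b) ≥ ψ t a - ψ t b)
    {S : Finset ι} {a : ι → E} (ha : ∀ t ∉ S, a t = 0) (d : ι → E) :
    ∑ t, ψ t (a t) + (∑ t, ψ t (d t) - 2 * ∑ t ∈ S, ψ t (d t)) ≤ ∑ t, ψ t (a t - d t) := by
  classical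
  have hclean : ∑ t, ψ t (a t) = ∑ t ∈ S, ψ t (a t) :=
    (sum_subset (subset_univ S) fun t _ ht => by rw [ha t ht, hψ0]).symm
  have hout : ∑ t ∈ Sᶜ, ψ t (a t - d t) = ∑ t ∈ Sᶜ, ψ t (d t) :=
    sum_congr rfl fun t ht => by rw [ha t (mem_compl.1 ht), zero_sub, hψsym]
  have hin : ∑ t ∈ S, (ψ t (a t) - ψ t (d t)) ≤ ∑ t ∈ S, ψ t (a t - d t) :=
    sum_le_sum fun t _ => hψsub t _ _
  rw [sum_sub_distrib] at hin
  rw [← sum_add_sum_compl S fun t => ψ t (a t - d t), ← sum_add_sum_compl S fun t => ψ t (d t),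
    hclean, hout]
  linarith

end RobustLoss

theorem Finset.sum_lt_of_card_le_of_forall_card_eq {ι : Type*} [Fintype ι] {f : ι → ℝ}
    (hf : ∀ i, 0 ≤ f i) {r : ℕ} (hr : r ≤ Fintype.card ι) {c : ℝ}
    (h : ∀ I : Finset ι, I.card = r → ∑ i ∈ I, f i < c) {S : Finset ι} (hS : S.card ≤ r) :
    ∑ i ∈ S, f i < c := by
  obtain ⟨J, hSJ, hJ⟩ := exists_superset_card_eq hS (by simpa using hr)
  exact (sum_le_sum_of_subset_of_nonneg hSJ fun i _ _ => hf i).trans_lt (h J hJ)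

theorem exact_recovery_sufficient_general (T n ny : ℕ) (r : ℕ) (hrT : r ≤ T)
    (M : Fin T → Matrix (Fin ny) (Fin n) ℝ)
    (ψ : Fin T → (Fin ny → ℝ) → ℝ)
    (hψ0 : ∀ t, ψ t 0 = 0)
    (hψsym : ∀ t e, ψ t (-e) = ψ t e)
    (hψGTI : ∀ t a b, ψ t (a - b) ≥ ψ t a - ψ t b)
    (hnu : ∀ z : Fin n → ℝ, z ≠ 0 → ∀ I : Finset (Fin T), I.card = r →
      ∑ t ∈ I, ψ t ((M t).mulVec z) < (1 / 2) * ∑ t, ψ t ((M t).mulVec z))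
    (Y : Fin T → Fin ny → ℝ) (z0 : Fin n → ℝ)
    (hY : {t : Fin T | Y t ≠ (M t).mulVec z0}.ncard ≤ r) :
    ∀ z : Fin n → ℝ, z ≠ z0 →
      ∑ t, ψ t (Y t - (M t).mulVec z0) < ∑ t, ψ t (Y t - (M t).mulVec z) := by
  classical
  intro z hz
  set S := univ.filter fun t => Y t ≠ (M t).mulVec z0
  have hS : S.card ≤ r := by simpa [S, ← Set.ncard_coe_finset] using hY
  have hhalf := sum_lt_of_card_le_of_forall_card_eq
    (fun t => nonneg_of_map_sub_ge (hψ0 t) (hψsym t) (hψGTI t) _) (by simpa using hrT)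
    (hnu (z - z0) (sub_ne_zero.2 hz)) hS
  have hres : ∀ t, Y t - (M t).mulVec z = (Y t - (M t).mulVec z0) - (M t).mulVec (z - z0) := by
    intro t
    rw [Matrix.mulVec_sub]
    abel
  have hbound := sum_add_sub_two_mul_le_sum_sub hψ0 hψsym hψGTI
    (S := S) (a := fun t => Y t - (M t).mulVec z0) (fun t ht => by simpa [S, sub_eq_zero] using ht)
    fun t => (M t).mulVec (z - z0)
  simp only [hres]
  linarith

theorem exact_recovery_sufficient (T n ny : ℕ) (r : ℕ) (hrT : r ≤ T)
    (M : Fin T → Matrix (Fin ny) (Fin n) ℝ)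
    (ψ : Fin T → (Fin ny → ℝ) → ℝ)
    (hψ0 : ∀ t, ψ t 0 = 0) (hψpos : ∀ t e, e ≠ 0 → 0 < ψ t e)
    (hψsym : ∀ t e, ψ t (-e) = ψ t e)
    (hψGTI : ∀ t a b, ψ t (a - b) ≥ ψ t a - ψ t b)
    (hrank : ∀ z : Fin n → ℝ, (∀ t, (M t).mulVec z = 0) → z = 0)
    (hnu : ∀ z : Fin n → ℝ, z ≠ 0 → ∀ I : Finset (Fin T), I.card = r →
      ∑ t ∈ I, ψ t ((M t).mulVec z) < (1 / 2) * ∑ t, ψ t ((M t).mulVec z))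
    (Y : Fin T → Fin ny → ℝ) (z0 : Fin n → ℝ)
    (hY : {t : Fin T | Y t ≠ (M t).mulVec z0}.ncard ≤ r) :
    ∀ z : Fin n → ℝ, z ≠ z0 →
      ∑ t, ψ t (Y t - (M t).mulVec z0) < ∑ t, ψ t (Y t - (M t).mulVec z) :=
  exact_recovery_sufficient_general T n ny r hrT M ψ hψ0 hψsym hψGTI hnu Y z0 hY
end

section
/- Let $\{M_t\}_{t=0}^{T-1}$ be matrices in $\mathbb{R}^{n_y \times n}$ and define $\mu(M)$ as the minimum integer $k$ such that for every subset $I \subset \{0,\dots,T-1\}$ with $|I| = k$, the stacked matrix $M_I$ formed from $\{M_t : t \in I\}$ has full column rank $n$. Let $\psi_t(e) = 1$ if $e \neq 0$ and $0$ otherwise (block $\ell_0$ loss). Then for every nonzero $z \in \mathbb{R}^n$, $\sum_{t=0}^{T-1} \psi_t(M_t z) \geq T - \mu(M) + 1$, and consequently the concentration ratio satisfies $\nu_r(M) \leq \frac{r}{T - \mu(M) + 1}$. -/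
/-! If `z ≠ 0`, the blocks `t` with `M t *ᵥ z = 0` cannot contain `k` indices, since `k` such
blocks jointly determine `z = 0`. Hence at least `T - k + 1` blocks of `M z` are nonzero, which
bounds the block-`ℓ₀` loss from below; any `r` blocks carry loss at most `r`. -/

open Finset Matrix

theorem card_filter_lt_of_forall_card_eq {ι : Type*} {s : Finset ι} {p : ι → Prop}
    [DecidablePred p] {k : ℕ} (h : ∀ I ⊆ s, #I = k → ∃ t ∈ I, ¬ p t) :
    #(s.filter p) < k := by
  by_contra! hle
  obtain ⟨I, hIp, hIk⟩ := exists_subset_card_eq hle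
  obtain ⟨t, ht, hnp⟩ := h I (hIp.trans (filter_subset _ _)) hIk
  exact hnp (mem_filter.1 (hIp ht)).2

theorem card_lt_card_mulVec_ne_zero_add {ι m n R : Type*} [Fintype ι]
    [Fintype n] [NonUnitalNonAssocSemiring R] [DecidableEq (m → R)]
    (M : ι → Matrix m n R) {k : ℕ}
    (hk : ∀ I : Finset ι, #I = k → ∀ z : n → R, (∀ t ∈ I, M t *ᵥ z = 0) → z = 0)
    {z : n → R} (hz : z ≠ 0) :
    Fintype.card ι < #{t | M t *ᵥ z ≠ 0} + k := by
  have hzero : #{t | M t *ᵥ z = 0} < k :=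
    card_filter_lt_of_forall_card_eq fun I _ hIk => by
      by_contra! hI
      exact hz (hk I hIk z hI)
  have hsplit : #{t | M t *ᵥ z = 0} + #{t | M t *ᵥ z ≠ 0} = Fintype.card ι :=
    card_filter_add_card_filter_not _
  omega

theorem l0_concentration_bound_general (T n ny : ℕ)
    (M : Fin T → Matrix (Fin ny) (Fin n) ℝ)
    (k : ℕ) (hkT : k ≤ T)
    (hk : ∀ I : Finset (Fin T), I.card = k →
      ∀ z : Fin n → ℝ, (∀ t ∈ I, (M t).mulVec z = 0) → z = 0)
    (ψ : Fin T → (Fin ny → ℝ) → ℝ)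
    (hψ : ∀ t e, ψ t e = if e = 0 then 0 else 1) :
    (∀ z : Fin n → ℝ, z ≠ 0 → (T : ℝ) - k + 1 ≤ ∑ t, ψ t ((M t).mulVec z)) ∧
      (∀ (r : ℕ) (z : Fin n → ℝ), z ≠ 0 → ∀ I : Finset (Fin T), I.card = r →
        (∑ t ∈ I, ψ t ((M t).mulVec z)) / (∑ t, ψ t ((M t).mulVec z)) ≤
          (r : ℝ) / ((T : ℝ) - k + 1)) := by
  classical
  have hloss (z : Fin n → ℝ) (s : Finset (Fin T)) :
      ∑ t ∈ s, ψ t (M t *ᵥ z) = #{t ∈ s | M t *ᵥ z ≠ 0} := by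
    simp only [hψ, sum_ite, sum_const_zero, sum_const, nsmul_eq_mul, mul_one, zero_add]
  have hlower (z : Fin n → ℝ) (hz : z ≠ 0) : (T : ℝ) - k + 1 ≤ ∑ t, ψ t (M t *ᵥ z) := by
    have h := card_lt_card_mulVec_ne_zero_add M hk hz
    rw [Fintype.card_fin, Nat.lt_iff_add_one_le] at h
    rw [hloss]
    have : (T : ℝ) + 1 ≤ #{t | M t *ᵥ z ≠ 0} + k := by exact_mod_cast h
    linarith
  have hpos : (0 : ℝ) < T - k + 1 := by
    have : (k : ℝ) ≤ T := by exact_mod_cast hkT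
    linarith
  refine ⟨hlower, fun r z hz I hI => div_le_div₀ (Nat.cast_nonneg r) ?_ hpos (hlower z hz)⟩
  rw [hloss, ← hI]
  exact_mod_cast card_filter_le _ _

theorem l0_concentration_bound (T n ny : ℕ)
    (M : Fin T → Matrix (Fin ny) (Fin n) ℝ)
    (k : ℕ) (hk1 : 1 ≤ k) (hkT : k ≤ T)
    (hk : ∀ I : Finset (Fin T), I.card = k →
      ∀ z : Fin n → ℝ, (∀ t ∈ I, (M t).mulVec z = 0) → z = 0)
    (hkmin : ∀ k' < k, ¬ (∀ I : Finset (Fin T), I.card = k' →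
      ∀ z : Fin n → ℝ, (∀ t ∈ I, (M t).mulVec z = 0) → z = 0))
    (ψ : Fin T → (Fin ny → ℝ) → ℝ)
    (hψ : ∀ t e, ψ t e = if e = 0 then 0 else 1) :
    (∀ z : Fin n → ℝ, z ≠ 0 → (T : ℝ) - k + 1 ≤ ∑ t, ψ t ((M t).mulVec z)) ∧
      (∀ (r : ℕ) (z : Fin n → ℝ), z ≠ 0 → ∀ I : Finset (Fin T), I.card = r →
        (∑ t ∈ I, ψ t ((M t).mulVec z)) / (∑ t, ψ t ((M t).mulVec z)) ≤
          (r : ℝ) / ((T : ℝ) - k + 1)) :=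
  l0_concentration_bound_general T n ny M k hkT hk ψ hψ
end

section
/- Observability implies a lower bound on the performance functional: consider an LTV system with matrices $\{A_t\}, \{C_t\}$, loss functions $\phi_t, \psi_t$ that are continuous, positive definite, symmetric and generalized homogeneous with $\mathcal{K}_\infty$ gauges, and the functional $V_\Sigma(0, Z) = \lambda \sum_{t=0}^{T-2} \phi_t(z_{t+1} - A_t z_t) + \sum_{t=0}^{T-1} \psi_t(C_t z_t)$ for $Z = (z_0, \dots, z_{T-1})$ with $\lambda > 0$. If the observability matrix $\mathcal{O}_{0,T-1}$ (the vertical stacking of $C_0$, $C_1 A_0$, ..., $C_{T-1} A_{T-2} \cdots A_0$) has full column rank $n$, then there exists a $\mathcal{K}_\infty$ function $q$ such that $V_\Sigma(0, Z) \geq q(\|z_0\|)$ for all $Z \in \mathbb{R}^{n \times T}$. -/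
def prodA (n : ℕ) (A : ℕ → Matrix (Fin n) (Fin n) ℝ) : ℕ → Matrix (Fin n) (Fin n) ℝ
  | 0 => 1
  | t + 1 => A t * prodA n A t

/-!
All gauges of `φ t, ψ t` with `t < T` dominate one `𝒦_∞` function `Q`, and then
`V(Z) ≥ Q(‖z₀‖) · V(Z / ‖z₀‖)`; so it suffices to bound `V` below by some `m > 0` on
`{‖z₀‖ = 1}`, and `q = m · Q` works. On that set `V` is positive by observability: a trajectory
of zero cost is free and has zero output. Each `φ t` is coercive, so on `{‖z₀‖ = 1, V ≤ 1}` the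
states `z₀, …, z_{T-1}` stay bounded; as `V` ignores the later states, `V` attains a positive
minimum on a compact set carrying all its values below `1`.
-/

namespace IsKInf

theorem id : IsKInf fun r => r :=
  ⟨continuousOn_id, rfl, fun _ _ _ _ h => h, Filter.tendsto_id⟩

variable {q q' : ℝ → ℝ}

theorem nonneg_s18 (hq : IsKInf q) {r : ℝ} (hr : 0 ≤ r) : 0 ≤ q r :=
  hq.2.1 ▸ hq.2.2.1.monotoneOn Set.self_mem_Ici hr hr

theorem min (hq : IsKInf q) (hq' : IsKInf q') : IsKInf fun r => min (q r) (q' r) :=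
  ⟨hq.1.inf hq'.1, by simp [hq.2.1, hq'.2.1],
    fun _ ha _ hb hab => min_lt_min (hq.2.2.1 ha hb hab) (hq'.2.2.1 ha hb hab),
    Filter.tendsto_inf_atTop _ hq.2.2.2 hq'.2.2.2⟩

theorem const_mul (hq : IsKInf q) {m : ℝ} (hm : 0 < m) : IsKInf fun r => m * q r :=
  ⟨continuousOn_const.mul hq.1, by simp [hq.2.1],
    fun _ ha _ hb hab => mul_lt_mul_of_pos_left (hq.2.2.1 ha hb hab) hm,
    hq.2.2.2.const_mul_atTop hm⟩

end IsKInf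

theorem exists_isKInf_le (q : ℕ → ℝ → ℝ) (hq : ∀ t, IsKInf (q t)) (T : ℕ) :
    ∃ Q, IsKInf Q ∧ ∀ t < T, ∀ r, Q r ≤ q t r := by
  induction T with
  | zero => exact ⟨fun r => r, IsKInf.id, by simp⟩
  | succ T ih =>
    obtain ⟨Q, hQ, hle⟩ := ih
    refine ⟨fun r => min (Q r) (q T r), hQ.min (hq T), fun t ht r => ?_⟩
    rcases Nat.lt_succ_iff_lt_or_eq.1 ht with ht | rfl
    · exact (min_le_left _ _).trans (hle t ht r)
    · exact min_le_right _ _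

theorem nonneg_of_map_zero_of_pos {X : Type*} [Zero X] {f : X → ℝ} (h0 : f 0 = 0)
    (hpos : ∀ x ≠ 0, 0 < f x) (x : X) : 0 ≤ f x := by
  rcases eq_or_ne x 0 with rfl | hx
  · exact h0.ge
  · exact (hpos x hx).le

section GenHomogeneous

variable {X : Type*} [AddCommGroup X] [Module ℝ X]

def IsGenHomogeneous (f : X → ℝ) (q : ℝ → ℝ) : Prop :=
  ∀ c : ℝ, c ≠ 0 → ∀ x, q (1 / |c|) * f (c • x) ≤ f x

namespace IsGenHomogeneous

variable {f g : X → ℝ} {q q' : ℝ → ℝ}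

theorem mono (hf : IsGenHomogeneous f q) (hnn : ∀ x, 0 ≤ f x) (hle : ∀ r > 0, q' r ≤ q r) :
    IsGenHomogeneous f q' := fun c hc x =>
  (mul_le_mul_of_nonneg_right (hle _ (by positivity)) (hnn _)).trans (hf c hc x)

theorem add (hf : IsGenHomogeneous f q) (hg : IsGenHomogeneous g q) :
    IsGenHomogeneous (fun x => f x + g x) q := fun c hc x => by
  rw [mul_add]
  exact add_le_add (hf c hc x) (hg c hc x)

theorem const_mul (hf : IsGenHomogeneous f q) {a : ℝ} (ha : 0 ≤ a) :
    IsGenHomogeneous (fun x => a * f x) q := fun c hc x => by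
  rw [mul_left_comm]
  exact mul_le_mul_of_nonneg_left (hf c hc x) ha

theorem sum {ι : Type*} (s : Finset ι) {f : ι → X → ℝ} (hf : ∀ i ∈ s, IsGenHomogeneous (f i) q) :
    IsGenHomogeneous (fun x => ∑ i ∈ s, f i x) q := fun c hc x => by
  rw [Finset.mul_sum]
  exact Finset.sum_le_sum fun i hi => hf i hi c hc x

theorem comp {Y : Type*} [AddCommGroup Y] [Module ℝ Y] {f : Y → ℝ}
    (hf : IsGenHomogeneous f q) {g : X → Y} (hg : ∀ (c : ℝ) x, g (c • x) = c • g x) :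
    IsGenHomogeneous (fun x => f (g x)) q := fun c hc x => by
  simp only [hg]
  exact hf c hc (g x)

theorem mul_gauge_le (hf : IsGenHomogeneous f q) (hnn : ∀ x, 0 ≤ f x) (hq : IsKInf q) {N : X → ℝ}
    (hN : ∀ x, 0 ≤ N x) (hN_smul : ∀ (c : ℝ) x, N (c • x) = |c| * N x) {m : ℝ}
    (hm : ∀ x, N x = 1 → m ≤ f x) (x : X) : m * q (N x) ≤ f x := by
  rcases (hN x).eq_or_lt with h | h
  · rw [← h, hq.2.1, mul_zero]
    exact hnn x
  · have hc : (N x)⁻¹ ≠ 0 := by positivity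
    have hunit : N ((N x)⁻¹ • x) = 1 := by
      rw [hN_smul, abs_of_pos (inv_pos.2 h), inv_mul_cancel₀ h.ne']
    have hscale := hf _ hc x
    rw [abs_of_pos (inv_pos.2 h), one_div, inv_inv] at hscale
    calc m * q (N x) = q (N x) * m := mul_comm _ _
      _ ≤ q (N x) * f ((N x)⁻¹ • x) := mul_le_mul_of_nonneg_left (hm _ hunit) (hq.nonneg_s18 h.le)
      _ ≤ f x := hscale

end IsGenHomogeneous

theorem IsGenHomogeneous.exists_norm_le {E : Type*} [NormedAddCommGroup E] [NormedSpace ℝ E]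
    [FiniteDimensional ℝ E] {f : E → ℝ} {q : ℝ → ℝ} (hf : IsGenHomogeneous f q)
    (hq : IsKInf q) (hcont : Continuous f) (hnn : ∀ x, 0 ≤ f x) (hpos : ∀ x ≠ 0, 0 < f x)
    (c : ℝ) : ∃ R, ∀ x, f x ≤ c → ‖x‖ ≤ R := by
  obtain ⟨m, hm, hmf⟩ := (isCompact_sphere (0 : E) 1).exists_forall_le' hcont.continuousOn
    fun x hx => hpos x (ne_zero_of_mem_unit_sphere ⟨x, hx⟩)
  have hcoercive : ∀ x, m * q ‖x‖ ≤ f x :=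
    hf.mul_gauge_le hnn hq norm_nonneg (fun c x => by rw [norm_smul, Real.norm_eq_abs])
      fun x hx => hmf x (mem_sphere_zero_iff_norm.2 hx)
  obtain ⟨R, hR⟩ := Filter.eventually_atTop.1 (hq.2.2.2.eventually_gt_atTop (c / m))
  refine ⟨R, fun x hx => le_of_not_gt fun hRx => ?_⟩
  have := (div_lt_iff₀' hm).1 (hR _ hRx.le)
  linarith [hcoercive x]

end GenHomogeneous

open Matrix

/-- The functional `V_Σ(0, Z)` of the paper, with `z_t = Z t`; only `Z 0, …, Z (T - 1)` enter. -/
def ltvCost {n ny : ℕ} (T : ℕ) (A : ℕ → Matrix (Fin n) (Fin n) ℝ)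
    (C : ℕ → Matrix (Fin ny) (Fin n) ℝ) (lam : ℝ) (φ : ℕ → (Fin n → ℝ) → ℝ)
    (ψ : ℕ → (Fin ny → ℝ) → ℝ) (Z : ℕ → Fin n → ℝ) : ℝ :=
  lam * ∑ t ∈ Finset.range (T - 1), φ t (Z (t + 1) - A t *ᵥ Z t) +
    ∑ t ∈ Finset.range T, ψ t (C t *ᵥ Z t)

theorem eq_prodA_mulVec_of_forall_succ_eq {n k : ℕ} {A : ℕ → Matrix (Fin n) (Fin n) ℝ}
    {Z : ℕ → Fin n → ℝ} (h : ∀ t < k, Z (t + 1) = A t *ᵥ Z t) :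
    ∀ t ≤ k, Z t = prodA n A t *ᵥ Z 0
  | 0, _ => (one_mulVec _).symm
  | t + 1, ht => by
    rw [h t ht, eq_prodA_mulVec_of_forall_succ_eq h t (Nat.le_of_succ_le ht), mulVec_mulVec]
    rfl

section ltvCost

variable {n ny T : ℕ} {A : ℕ → Matrix (Fin n) (Fin n) ℝ} {C : ℕ → Matrix (Fin ny) (Fin n) ℝ}
  {lam : ℝ} {φ : ℕ → (Fin n → ℝ) → ℝ} {ψ : ℕ → (Fin ny → ℝ) → ℝ}

theorem ltvCost_congr {Z Z' : ℕ → Fin n → ℝ} (h : ∀ t < T, Z t = Z' t) :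
    ltvCost T A C lam φ ψ Z = ltvCost T A C lam φ ψ Z' := by
  refine congrArg₂ (· + ·) (congrArg (lam * ·) (Finset.sum_congr rfl fun t ht => ?_))
    (Finset.sum_congr rfl fun t ht => ?_) <;> have ht := Finset.mem_range.1 ht
  · rw [h t (by omega), h (t + 1) (by omega)]
  · rw [h t ht]

theorem continuous_ltvCost (hφ : ∀ t, Continuous (φ t)) (hψ : ∀ t, Continuous (ψ t)) :
    Continuous (ltvCost T A C lam φ ψ) := by
  unfold ltvCost
  fun_prop

theorem ltvCost_nonneg (hlam : 0 ≤ lam) (hφ : ∀ t z, 0 ≤ φ t z) (hψ : ∀ t e, 0 ≤ ψ t e)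
    (Z : ℕ → Fin n → ℝ) : 0 ≤ ltvCost T A C lam φ ψ Z :=
  add_nonneg (mul_nonneg hlam (Finset.sum_nonneg fun t _ => hφ t _))
    (Finset.sum_nonneg fun t _ => hψ t _)

theorem mul_le_ltvCost (hlam : 0 ≤ lam) (hφ : ∀ t z, 0 ≤ φ t z) (hψ : ∀ t e, 0 ≤ ψ t e)
    (Z : ℕ → Fin n → ℝ) {t : ℕ} (ht : t < T - 1) :
    lam * φ t (Z (t + 1) - A t *ᵥ Z t) ≤ ltvCost T A C lam φ ψ Z :=
  le_add_of_le_of_nonneg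
    (mul_le_mul_of_nonneg_left
      (Finset.single_le_sum (f := fun s => φ s (Z (s + 1) - A s *ᵥ Z s))
        (fun s _ => hφ s _) (Finset.mem_range.2 ht)) hlam)
    (Finset.sum_nonneg fun t _ => hψ t _)

theorem le_ltvCost (hlam : 0 ≤ lam) (hφ : ∀ t z, 0 ≤ φ t z) (hψ : ∀ t e, 0 ≤ ψ t e)
    (Z : ℕ → Fin n → ℝ) {t : ℕ} (ht : t < T) :
    ψ t (C t *ᵥ Z t) ≤ ltvCost T A C lam φ ψ Z :=
  le_add_of_nonneg_of_le (mul_nonneg hlam (Finset.sum_nonneg fun t _ => hφ t _))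
    (Finset.single_le_sum (f := fun s => ψ s (C s *ᵥ Z s)) (fun s _ => hψ s _)
      (Finset.mem_range.2 ht))

theorem isGenHomogeneous_ltvCost {q : ℝ → ℝ} (hlam : 0 ≤ lam)
    (hφ : ∀ t < T - 1, IsGenHomogeneous (φ t) q) (hψ : ∀ t < T, IsGenHomogeneous (ψ t) q) :
    IsGenHomogeneous (ltvCost T A C lam φ ψ) q :=
  ((IsGenHomogeneous.sum _ fun t ht => (hφ t (Finset.mem_range.1 ht)).comp
      fun c Z => by simp only [Pi.smul_apply, mulVec_smul, smul_sub]).const_mul hlam).add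
    (IsGenHomogeneous.sum _ fun t ht => (hψ t (Finset.mem_range.1 ht)).comp
      fun c Z => by simp only [Pi.smul_apply, mulVec_smul])

theorem ltvCost_pos (hlam : 0 < lam) (hφnn : ∀ t z, 0 ≤ φ t z) (hψnn : ∀ t e, 0 ≤ ψ t e)
    (hφpos : ∀ t z, z ≠ 0 → 0 < φ t z) (hψpos : ∀ t e, e ≠ 0 → 0 < ψ t e)
    (hobs : ∀ z : Fin n → ℝ, (∀ t < T, (C t * prodA n A t).mulVec z = 0) → z = 0)
    {Z : ℕ → Fin n → ℝ} (hZ : Z 0 ≠ 0) : 0 < ltvCost T A C lam φ ψ Z := by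
  by_contra! hV
  have hfree : ∀ t < T - 1, Z (t + 1) = A t *ᵥ Z t := fun t ht => by
    by_contra hne
    exact (mul_pos hlam (hφpos t _ (sub_ne_zero.2 hne))).not_ge
      ((mul_le_ltvCost hlam.le hφnn hψnn Z ht).trans hV)
  refine hZ (hobs _ fun t ht => ?_)
  rw [← mulVec_mulVec, ← eq_prodA_mulVec_of_forall_succ_eq hfree t (by omega)]
  by_contra hne
  exact (hψpos t _ hne).not_ge ((le_ltvCost hlam.le hφnn hψnn Z ht).trans hV)

theorem exists_norm_le_of_ltvCost_le_one (hlam : 0 < lam) (hφnn : ∀ t z, 0 ≤ φ t z)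
    (hψnn : ∀ t e, 0 ≤ ψ t e) (hφR : ∀ t c, ∃ R, ∀ w, φ t w ≤ c → ‖w‖ ≤ R) (t : ℕ) :
    ∃ B, ∀ Z : ℕ → Fin n → ℝ, ‖Z 0‖ ≤ 1 → ltvCost T A C lam φ ψ Z ≤ 1 → t < T → ‖Z t‖ ≤ B := by
  induction t with
  | zero => exact ⟨1, fun Z hZ0 _ _ => hZ0⟩
  | succ t ih =>
    obtain ⟨B, hB⟩ := ih
    obtain ⟨R, hR⟩ := hφR t (1 / lam)
    set L := LinearMap.toContinuousLinearMap (A t).mulVecLin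
    refine ⟨‖L‖ * B + R, fun Z hZ0 hV ht => ?_⟩
    have hw : ‖Z (t + 1) - A t *ᵥ Z t‖ ≤ R := hR _ <| by
      rw [le_div_iff₀' hlam]
      exact (mul_le_ltvCost hlam.le hφnn hψnn Z (by omega)).trans hV
    have hAZ : ‖A t *ᵥ Z t‖ ≤ ‖L‖ * B :=
      (L.le_opNorm (Z t)).trans
        (mul_le_mul_of_nonneg_left (hB Z hZ0 hV (by omega)) (norm_nonneg _))
    calc ‖Z (t + 1)‖ = ‖A t *ᵥ Z t + (Z (t + 1) - A t *ᵥ Z t)‖ := by rw [add_sub_cancel]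
      _ ≤ ‖L‖ * B + R := (norm_add_le _ _).trans (add_le_add hAZ hw)

theorem exists_pos_le_ltvCost (hT : 0 < T) (hlam : 0 < lam) (hφcont : ∀ t, Continuous (φ t))
    (hψcont : ∀ t, Continuous (ψ t)) (hφnn : ∀ t z, 0 ≤ φ t z) (hψnn : ∀ t e, 0 ≤ ψ t e)
    (hφpos : ∀ t z, z ≠ 0 → 0 < φ t z) (hψpos : ∀ t e, e ≠ 0 → 0 < ψ t e)
    (hφR : ∀ t c, ∃ R, ∀ w, φ t w ≤ c → ‖w‖ ≤ R)
    (hobs : ∀ z : Fin n → ℝ, (∀ t < T, (C t * prodA n A t).mulVec z = 0) → z = 0) :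
    ∃ m > 0, ∀ Z : ℕ → Fin n → ℝ, ‖Z 0‖ = 1 → m ≤ ltvCost T A C lam φ ψ Z := by
  choose B hB using
    exists_norm_le_of_ltvCost_le_one (T := T) (A := A) (C := C) hlam hφnn hψnn hφR
  set K : Set (ℕ → Fin n → ℝ) := {Z | ‖Z 0‖ = 1} ∩
    Set.univ.pi fun t => Metric.closedBall 0 (if t < T then B t else 0)
  have hK : IsCompact K := (isCompact_univ_pi fun t => isCompact_closedBall _ _).inter_left
    (isClosed_eq (by fun_prop) continuous_const)
  obtain ⟨m, hm, hmK⟩ := hK.exists_forall_le' (continuous_ltvCost hφcont hψcont).continuousOn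
    fun Z hZ => ltvCost_pos hlam hφnn hψnn hφpos hψpos hobs
      (norm_ne_zero_iff.1 (hZ.1 ▸ one_ne_zero))
  refine ⟨min 1 m, lt_min one_pos hm, fun Z hZ0 => ?_⟩
  rcases le_or_gt 1 (ltvCost T A C lam φ ψ Z) with hV | hV
  · exact (min_le_left _ _).trans hV
  set Z' : ℕ → Fin n → ℝ := fun t => if t < T then Z t else 0
  have hZ' : ∀ t < T, Z' t = Z t := fun t ht => if_pos ht
  have hZ'K : Z' ∈ K := by
    refine ⟨(congrArg norm (hZ' 0 hT)).trans hZ0, fun t _ => ?_⟩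
    rw [Metric.mem_closedBall, dist_zero_right]
    by_cases ht : t < T
    · simpa only [Z', if_pos ht] using hB t Z hZ0.le hV.le ht
    · simp [Z', ht]
  calc min 1 m ≤ m := min_le_right _ _
    _ ≤ ltvCost T A C lam φ ψ Z' := hmK Z' hZ'K
    _ = ltvCost T A C lam φ ψ Z := ltvCost_congr hZ'

end ltvCost

theorem observability_implies_lower_bound_general (n ny T : ℕ) (hT : 0 < T)
    (A : ℕ → Matrix (Fin n) (Fin n) ℝ) (C : ℕ → Matrix (Fin ny) (Fin n) ℝ)
    (lam : ℝ) (hlam : 0 < lam)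
    (φ : ℕ → (Fin n → ℝ) → ℝ) (ψ : ℕ → (Fin ny → ℝ) → ℝ)
    (hφcont : ∀ t, Continuous (φ t)) (hφ0 : ∀ t, φ t 0 = 0)
    (hφpos : ∀ t z, z ≠ 0 → 0 < φ t z)
    (hφGH : ∀ t, ∃ qt : ℝ → ℝ, IsKInf qt ∧
      ∀ c : ℝ, c ≠ 0 → ∀ z, φ t z ≥ qt (1 / |c|) * φ t (c • z))
    (hψcont : ∀ t, Continuous (ψ t)) (hψ0 : ∀ t, ψ t 0 = 0)
    (hψpos : ∀ t e, e ≠ 0 → 0 < ψ t e)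
    (hψGH : ∀ t, ∃ qt : ℝ → ℝ, IsKInf qt ∧
      ∀ c : ℝ, c ≠ 0 → ∀ e, ψ t e ≥ qt (1 / |c|) * ψ t (c • e))
    (hobs : ∀ z : Fin n → ℝ, (∀ t < T, (C t * prodA n A t).mulVec z = 0) → z = 0) :
    ∃ q : ℝ → ℝ, IsKInf q ∧ ∀ Z : ℕ → Fin n → ℝ,
      lam * ∑ t ∈ Finset.range (T - 1), φ t (Z (t + 1) - (A t).mulVec (Z t)) +
          ∑ t ∈ Finset.range T, ψ t ((C t).mulVec (Z t)) ≥ q ‖Z 0‖ := by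
  choose qφ hqφ hφGH using hφGH
  choose qψ hqψ hψGH using hψGH
  replace hφGH : ∀ t, IsGenHomogeneous (φ t) (qφ t) := hφGH
  replace hψGH : ∀ t, IsGenHomogeneous (ψ t) (qψ t) := hψGH
  have hφnn t := nonneg_of_map_zero_of_pos (hφ0 t) (hφpos t)
  have hψnn t := nonneg_of_map_zero_of_pos (hψ0 t) (hψpos t)
  obtain ⟨m, hm, hmV⟩ := exists_pos_le_ltvCost hT hlam hφcont hψcont hφnn hψnn hφpos hψpos
    (fun t => (hφGH t).exists_norm_le (hqφ t) (hφcont t) (hφnn t) (hφpos t)) hobs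
  obtain ⟨Q, hQ, hQle⟩ := exists_isKInf_le _ (fun t => (hqφ t).min (hqψ t)) T
  have hV : IsGenHomogeneous (ltvCost T A C lam φ ψ) Q := isGenHomogeneous_ltvCost hlam.le
    (fun t ht => (hφGH t).mono (hφnn t) fun r _ => (hQle t (by omega) r).trans (min_le_left _ _))
    (fun t ht => (hψGH t).mono (hψnn t) fun r _ => (hQle t ht r).trans (min_le_right _ _))
  refine ⟨fun r => m * Q r, hQ.const_mul hm, fun Z => ?_⟩
  exact hV.mul_gauge_le (ltvCost_nonneg hlam.le hφnn hψnn) hQ (fun Z => norm_nonneg (Z 0))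
    (fun c Z => by rw [Pi.smul_apply, norm_smul, Real.norm_eq_abs]) hmV Z

theorem observability_implies_lower_bound (n ny T : ℕ) (hT : 0 < T)
    (A : ℕ → Matrix (Fin n) (Fin n) ℝ) (C : ℕ → Matrix (Fin ny) (Fin n) ℝ)
    (lam : ℝ) (hlam : 0 < lam)
    (φ : ℕ → (Fin n → ℝ) → ℝ) (ψ : ℕ → (Fin ny → ℝ) → ℝ)
    (hφcont : ∀ t, Continuous (φ t)) (hφ0 : ∀ t, φ t 0 = 0)
    (hφpos : ∀ t z, z ≠ 0 → 0 < φ t z) (hφsym : ∀ t z, φ t (-z) = φ t z)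
    (hφGH : ∀ t, ∃ qt : ℝ → ℝ, IsKInf qt ∧
      ∀ c : ℝ, c ≠ 0 → ∀ z, φ t z ≥ qt (1 / |c|) * φ t (c • z))
    (hψcont : ∀ t, Continuous (ψ t)) (hψ0 : ∀ t, ψ t 0 = 0)
    (hψpos : ∀ t e, e ≠ 0 → 0 < ψ t e) (hψsym : ∀ t e, ψ t (-e) = ψ t e)
    (hψGH : ∀ t, ∃ qt : ℝ → ℝ, IsKInf qt ∧
      ∀ c : ℝ, c ≠ 0 → ∀ e, ψ t e ≥ qt (1 / |c|) * ψ t (c • e))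
    (hobs : ∀ z : Fin n → ℝ, (∀ t < T, (C t * prodA n A t).mulVec z = 0) → z = 0) :
    ∃ q : ℝ → ℝ, IsKInf q ∧ ∀ Z : ℕ → Fin n → ℝ,
      lam * ∑ t ∈ Finset.range (T - 1), φ t (Z (t + 1) - (A t).mulVec (Z t)) +
          ∑ t ∈ Finset.range T, ψ t ((C t).mulVec (Z t)) ≥ q ‖Z 0‖ :=
  observability_implies_lower_bound_general n ny T hT A C lam hlam φ ψ hφcont hφ0 hφpos hφGH hψcont
    hψ0 hψpos hψGH hobs
end
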